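/- arXiv:1009.3891 — 3 statements merged into one kernel-verified Lean document; each statement's English description precedes it below -/
import Mathlib

section
/- Let (A_i, B_i, E_i), i = 1,…,n, be i.i.d. triples of random variables with values in finite sets 𝒜×ℬ×ℰ, let W = f(Aⁿ) for an arbitrary function f : 𝒜ⁿ → 𝒲 into a finite set, and for each i define V_i = (W, A^{i−1}, B^{i−1}, B_{i+1}ⁿ, E^{i−1}). Then H(W) ≥ Σ_{i=1}^n I(V_i ; A_i | B_i). -/
noncomputable section

namespace SLSC

open scoped BigOperators

variable {Ω : Type*} [Fintype Ω]

open Classical in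
/-- Probability that the random variable `f` takes the value `x`, under the
probability mass function `w` on the finite sample space `Ω`. -/
def pr {X : Type*} (w : Ω → ℝ) (f : Ω → X) (x : X) : ℝ :=
  ∑ ω, if f ω = x then w ω else 0

/-- `w` is a probability mass function on `Ω`. -/
def IsPMF (w : Ω → ℝ) : Prop := (∀ ω, 0 ≤ w ω) ∧ ∑ ω, w ω = 1

/-- Shannon entropy (base 2) of the random variable `f`. -/
def H {X : Type*} [Fintype X] (w : Ω → ℝ) (f : Ω → X) : ℝ :=
  -∑ x, pr w f x * Real.logb 2 (pr w f x)

/-- Conditional entropy `H(f | g)` (base 2). -/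
def condH {X Y : Type*} [Fintype X] [Fintype Y] (w : Ω → ℝ) (f : Ω → X) (g : Ω → Y) : ℝ :=
  H w (fun ω => (f ω, g ω)) - H w g

/-- Mutual information `I(f ; g)` (base 2). -/
def MI {X Y : Type*} [Fintype X] [Fintype Y] (w : Ω → ℝ) (f : Ω → X) (g : Ω → Y) : ℝ :=
  H w f + H w g - H w (fun ω => (f ω, g ω))

/-- Conditional mutual information `I(f ; g | h)` (base 2). -/
def condMI {X Y Z : Type*} [Fintype X] [Fintype Y] [Fintype Z]
    (w : Ω → ℝ) (f : Ω → X) (g : Ω → Y) (h : Ω → Z) : ℝ :=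
  condH w f h - condH w f (fun ω => (g ω, h ω))

/-- Expectation of the real random variable `f`. -/
def expect (w : Ω → ℝ) (f : Ω → ℝ) : ℝ := ∑ ω, w ω * f ω

/-- Markov chain `f – g – h` : `f` and `h` are conditionally independent given `g`. -/
def Markov {X Y Z : Type*} (w : Ω → ℝ) (f : Ω → X) (g : Ω → Y) (h : Ω → Z) : Prop :=
  ∀ x y z,
    pr w (fun ω => (f ω, g ω, h ω)) (x, y, z) * pr w g y
      = pr w (fun ω => (f ω, g ω)) (x, y) * pr w (fun ω => (g ω, h ω)) (y, z)

/-- Markov chain `f – g – h – k` : each variable is conditionally independent of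
the preceding ones given its immediate predecessor. -/
def Markov4 {X Y Z T : Type*} (w : Ω → ℝ)
    (f : Ω → X) (g : Ω → Y) (h : Ω → Z) (k : Ω → T) : Prop :=
  Markov w f g h ∧ Markov w (fun ω => (f ω, g ω)) h k

variable {𝒜 ℬ ℰ : Type*} [Fintype 𝒜] [Fintype ℬ] [Fintype ℰ]

/-- Weight of the i.i.d. source `(Aⁿ,Bⁿ,Eⁿ)` with per-letter distribution `p`. -/
def iidW (p : 𝒜 × ℬ × ℰ → ℝ) (n : ℕ) : (Fin n → 𝒜 × ℬ × ℰ) → ℝ :=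
  fun ω => ∏ i, p (ω i)

/-- Alice's source sequence `Aⁿ`. -/
def An (n : ℕ) : (Fin n → 𝒜 × ℬ × ℰ) → Fin n → 𝒜 := fun ω i => (ω i).1

/-- Bob's side-information sequence `Bⁿ`. -/
def Bn (n : ℕ) : (Fin n → 𝒜 × ℬ × ℰ) → Fin n → ℬ := fun ω i => (ω i).2.1

/-- Eve's side-information sequence `Eⁿ`. -/
def En (n : ℕ) : (Fin n → 𝒜 × ℬ × ℰ) → Fin n → ℰ := fun ω i => (ω i).2.2

/-- `(R,D,Δ)` is achievable for the memoryless source `p` with distortion measure `d`: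
for every `ε > 0` there is an `(n, R+ε)`-code (encoder `f`, decoder `g`, at most
`2^{n(R+ε)}` messages) whose expected distortion at Bob is at most `D + ε` and whose
normalized equivocation at Eve is at least `Δ - ε`. -/
def Achievable (p : 𝒜 × ℬ × ℰ → ℝ) (d : 𝒜 → 𝒜 → ℝ) (R D Δ : ℝ) : Prop :=
  ∀ ε > (0 : ℝ), ∃ n M : ℕ, 0 < n ∧ 0 < M ∧
    (M : ℝ) ≤ (2 : ℝ) ^ ((n : ℝ) * (R + ε)) ∧
    ∃ (f : (Fin n → 𝒜) → Fin M) (g : Fin M → (Fin n → ℬ) → Fin n → 𝒜),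
      expect (iidW p n)
          (fun ω => ((n : ℝ))⁻¹ * ∑ i, d (An n ω i) (g (f (An n ω)) (Bn n ω) i)) ≤ D + ε ∧
      Δ - ε ≤ ((n : ℝ))⁻¹ * condH (iidW p n) (An n) (fun ω => (f (An n ω), En n ω))

/-- The single-letter region of Theorem 1, with auxiliary alphabets `Fin m` (for `U`)
and `Fin k` (for `V`): there is a joint pmf `q` of `(U,V,A,B,E)` with marginal `p`
on `(A,B,E)`, a Markov chain `U – V – A – (B,E)`, and a function `Â : 𝒱 × ℬ → 𝒜`
such that `R ≥ I(V;A|B)`, `D ≥ E[d(A, Â(V,B))]` and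
`Δ ≤ [H(A|V,B) + I(A;B|U) - I(A;E|U)]₊`. -/
def InRegion (p : 𝒜 × ℬ × ℰ → ℝ) (d : 𝒜 → 𝒜 → ℝ) (R D Δ : ℝ) (m k : ℕ) : Prop :=
  ∃ (q : Fin m × Fin k × 𝒜 × ℬ × ℰ → ℝ) (Ahat : Fin k × ℬ → 𝒜),
    IsPMF q ∧
    (∀ x : 𝒜 × ℬ × ℰ, pr q (fun ω => ω.2.2) x = p x) ∧
    Markov4 q (fun ω => ω.1) (fun ω => ω.2.1) (fun ω => ω.2.2.1) (fun ω => ω.2.2.2) ∧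
    condMI q (fun ω => ω.2.1) (fun ω => ω.2.2.1) (fun ω => ω.2.2.2.1) ≤ R ∧
    expect q (fun ω => d ω.2.2.1 (Ahat (ω.2.1, ω.2.2.2.1))) ≤ D ∧
    Δ ≤ max (condH q (fun ω => ω.2.2.1) (fun ω => (ω.2.1, ω.2.2.2.1))
          + condMI q (fun ω => ω.2.2.1) (fun ω => ω.2.2.2.1) (fun ω => ω.1)
          - condMI q (fun ω => ω.2.2.1) (fun ω => ω.2.2.2.2) (fun ω => ω.1)) 0

/-- Side information `B` (second coordinate) is less noisy than `E` (third coordinate):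
`I(U;B) ≥ I(U;E)` for every `U` such that `U – A – (B,E)` is a Markov chain. -/
def LessNoisyBE (p : 𝒜 × ℬ × ℰ → ℝ) : Prop :=
  ∀ (m : ℕ) (q : Fin m × 𝒜 × ℬ × ℰ → ℝ), IsPMF q →
    (∀ x, pr q (fun ω => ω.2) x = p x) →
    Markov q (fun ω => ω.1) (fun ω => ω.2.1) (fun ω => ω.2.2) →
    MI q (fun ω => ω.1) (fun ω => ω.2.2.2) ≤ MI q (fun ω => ω.1) (fun ω => ω.2.2.1)

/-- Side information `E` (third coordinate) is less noisy than `B` (second coordinate):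
`I(U;E) ≥ I(U;B)` for every `U` such that `U – A – (B,E)` is a Markov chain. -/
def LessNoisyEB (p : 𝒜 × ℬ × ℰ → ℝ) : Prop :=
  ∀ (m : ℕ) (q : Fin m × 𝒜 × ℬ × ℰ → ℝ), IsPMF q →
    (∀ x, pr q (fun ω => ω.2) x = p x) →
    Markov q (fun ω => ω.1) (fun ω => ω.2.1) (fun ω => ω.2.2) →
    MI q (fun ω => ω.1) (fun ω => ω.2.2.1) ≤ MI q (fun ω => ω.1) (fun ω => ω.2.2.2)

/-- The auxiliary random variable `Uᵢ = (W, B_{i+1}ⁿ, E^{i-1})` where `W = f(Aⁿ)`. -/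
def auxU {𝒲 : Type*} (n : ℕ) (f : (Fin n → 𝒜) → 𝒲) (i : Fin n)
    (ω : Fin n → 𝒜 × ℬ × ℰ) :
    𝒲 × ({j : Fin n // i < j} → ℬ) × ({j : Fin n // j < i} → ℰ) :=
  (f (An n ω), fun j => (ω j.1).2.1, fun j => (ω j.1).2.2)

/-- The auxiliary random variable `Vᵢ = (W, A^{i-1}, B^{i-1}, B_{i+1}ⁿ, E^{i-1})`
where `W = f(Aⁿ)`. -/
def auxV {𝒲 : Type*} (n : ℕ) (f : (Fin n → 𝒜) → 𝒲) (i : Fin n)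
    (ω : Fin n → 𝒜 × ℬ × ℰ) :
    𝒲 × ({j : Fin n // j < i} → 𝒜) × ({j : Fin n // j < i} → ℬ)
      × ({j : Fin n // i < j} → ℬ) × ({j : Fin n // j < i} → ℰ) :=
  (f (An n ω), fun j => (ω j.1).1, fun j => (ω j.1).2.1,
    fun j => (ω j.1).2.1, fun j => (ω j.1).2.2)

/-- Binary symmetric channel with crossover probability `p`: `BSC p a e` is the
probability that the output is `e` given that the input is `a`. -/
def BSC (p : ℝ) (a e : Bool) : ℝ := if e = a then 1 - p else p

/-- Binary erasure channel with erasure probability `ε` (output `none` is the erasure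
symbol): `BEC ε a b` is the probability that the output is `b` given input `a`. -/
def BEC (ε : ℝ) (a : Bool) (b : Option Bool) : ℝ :=
  match b with
  | some b' => if b' = a then 1 - ε else 0
  | none => ε

/-- Binary entropy function (base 2). -/
def h2 (x : ℝ) : ℝ := -(x * Real.logb 2 x) - (1 - x) * Real.logb 2 (1 - x)

/-- `sop a b = a ⋆ b = a(1-b) + (1-a)b`. -/
def sop (a b : ℝ) : ℝ := a * (1 - b) + (1 - a) * b

/-- Hamming distortion on `Bool`. -/
def hamming (a a' : Bool) : ℝ := if a = a' then 0 else 1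

/-- Joint distribution of `(A,B,E)` for a uniform binary source `A`, with
`B = BEC(ε)(A)` at Bob and `E = BSC(p)(A)` at Eve (independent channel noises). -/
def binSrc (p ε : ℝ) : Bool × Option Bool × Bool → ℝ :=
  fun x => (1 / 2) * BEC ε x.1 x.2.1 * BSC p x.1 x.2.2

/-- Joint distribution of `(U,V,A,B,E)` in the achievability scheme for the binary
example: `A` uniform, `V = A ⊕ Z_α`, `U = V ⊕ Z_β`, `B = BEC(ε)(A)`, `E = A ⊕ N_p`,
with all noises mutually independent.  Coordinates: `(u,v,a,b,e)`. -/
def exJoint (p ε α β : ℝ) : Bool × Bool × Bool × Option Bool × Bool → ℝ :=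
  fun x =>
    (1 / 2) * BSC α x.2.2.1 x.2.1 * BSC β x.2.1 x.1
      * BEC ε x.2.2.1 x.2.2.2.1 * BSC p x.2.2.1 x.2.2.2.2

/-!
Put `Cₖ = ((Aⱼ, Eⱼ)_{j<k}, Bⁿ)`. The pair `(Vᵢ, Bᵢ)` carries the same information as
`(W, Cᵢ)`, and `Cᵢ` is `Bᵢ` together with data independent of `(Aᵢ, Bᵢ)`, so
`H(Aᵢ | Bᵢ) = H(Aᵢ | Cᵢ)` and
`I(Vᵢ; Aᵢ | Bᵢ) = I(W; Aᵢ | Cᵢ) = H(W | Cᵢ) - H(W | Aᵢ, Cᵢ) ≤ H(W | Cᵢ) - H(W | Cᵢ₊₁)`,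
because `Cᵢ₊₁` determines `(Aᵢ, Cᵢ)`. Summing telescopes to `H(W | C₀) - H(W | Cₙ) ≤ H(W)`.

The entropy inequalities all come from the surprisal form `H(f) = -∑_ω w ω log₂ P(f = f ω)`:
it makes `H` monotone under coarsening, and together with `log t ≤ t - 1` it yields
`I(f; g | h) ≥ 0` (Gibbs' inequality against the conditionally independent law).
-/

section Entropy

variable {X Y Z : Type*} {w : Ω → ℝ}

lemma pr_nonneg (hw : ∀ ω, 0 ≤ w ω) (f : Ω → X) (x : X) : 0 ≤ pr w f x :=
  Finset.sum_nonneg fun ω _ => by split_ifs <;> simp [hw ω]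

lemma le_pr_apply (hw : ∀ ω, 0 ≤ w ω) (f : Ω → X) (ω : Ω) : w ω ≤ pr w f (f ω) := by
  classical
  have := Finset.single_le_sum (f := fun ω' => if f ω' = f ω then w ω' else 0)
    (fun ω' _ => by split_ifs <;> simp [hw ω']) (Finset.mem_univ ω)
  simpa [pr] using this

lemma pr_apply_pos (hw : ∀ ω, 0 ≤ w ω) (f : Ω → X) {ω : Ω} (hω : 0 < w ω) :
    0 < pr w f (f ω) :=
  hω.trans_le (le_pr_apply hw f ω)

lemma sum_pr_mul [Fintype X] (f : Ω → X) (F : X → ℝ) :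
    ∑ x, pr w f x * F x = ∑ ω, w ω * F (f ω) := by
  classical
  simp only [pr, Finset.sum_mul, ite_mul, zero_mul]
  rw [Finset.sum_comm]
  simp

lemma sum_pr [Fintype X] (f : Ω → X) : ∑ x, pr w f x = ∑ ω, w ω := by
  simpa using sum_pr_mul (w := w) f 1

lemma sum_pr_pair_left [Fintype X] (u : Ω → X) (v : Ω → Y) (y : Y) :
    ∑ x, pr w (fun ω => (u ω, v ω)) (x, y) = pr w v y := by
  classical
  unfold pr
  rw [Finset.sum_comm]
  simp [Prod.ext_iff, ite_and]

lemma H_eq_neg_sum_mul_logb_pr [Fintype X] (f : Ω → X) :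
    H w f = -∑ ω, w ω * Real.logb 2 (pr w f (f ω)) := by
  rw [H, sum_pr_mul f fun x => Real.logb 2 (pr w f x)]

lemma H_const [Fintype X] (hw : IsPMF w) (c : X) : H w (fun _ => c) = 0 := by
  have hc : pr w (fun _ => c) c = 1 := by simp [pr, hw.2]
  simp [H_eq_neg_sum_mul_logb_pr, hc]

def Determines {α : Type*} (u : α → X) (v : α → Y) : Prop := ∀ a a', u a = u a' → v a = v a'

lemma pr_le_pr_of_determines (hw : ∀ ω, 0 ≤ w ω) {u : Ω → X} {v : Ω → Y}
    (huv : Determines u v) (ω : Ω) : pr w u (u ω) ≤ pr w v (v ω) :=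
  Finset.sum_le_sum fun ω' _ => by
    by_cases h : u ω' = u ω
    · simp [h, huv ω' ω h]
    · simp only [h, if_false]; split_ifs <;> simp [hw ω']

lemma mul_logb_le_mul_logb {a b c : ℝ} (ha : 0 ≤ a) (hab : a ≤ b) (hbc : b ≤ c) :
    a * Real.logb 2 b ≤ a * Real.logb 2 c := by
  rcases ha.eq_or_lt with rfl | ha
  · simp
  · exact mul_le_mul_of_nonneg_left
      (Real.logb_le_logb_of_le one_lt_two (ha.trans_le hab) hbc) ha.le

lemma H_le_of_determines [Fintype X] [Fintype Y] (hw : ∀ ω, 0 ≤ w ω) {u : Ω → X}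
    {v : Ω → Y} (huv : Determines u v) : H w v ≤ H w u := by
  rw [H_eq_neg_sum_mul_logb_pr, H_eq_neg_sum_mul_logb_pr, neg_le_neg_iff]
  exact Finset.sum_le_sum fun ω _ => mul_logb_le_mul_logb (hw ω) (le_pr_apply hw u ω)
    (pr_le_pr_of_determines hw huv ω)

lemma H_congr [Fintype X] [Fintype Y] (hw : ∀ ω, 0 ≤ w ω) {u : Ω → X} {v : Ω → Y}
    (huv : Determines u v) (hvu : Determines v u) : H w u = H w v :=
  le_antisymm (H_le_of_determines hw hvu) (H_le_of_determines hw huv)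

lemma condH_nonneg [Fintype X] [Fintype Y] (hw : ∀ ω, 0 ≤ w ω) (f : Ω → X) (g : Ω → Y) :
    0 ≤ condH w f g :=
  sub_nonneg.2 <| H_le_of_determines hw fun _ _ h => congrArg Prod.snd h

lemma condH_congr_right [Fintype X] [Fintype Y] [Fintype Z] (hw : ∀ ω, 0 ≤ w ω)
    (f : Ω → X) {g : Ω → Y} {g' : Ω → Z} (hg : Determines g g') (hg' : Determines g' g) :
    condH w f g = condH w f g' := by
  unfold condH
  rw [H_congr hw hg hg', H_congr hw (u := fun ω => (f ω, g ω)) (v := fun ω => (f ω, g' ω))]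
  · intro ω ω' h
    simp only [Prod.mk.injEq] at h ⊢
    exact ⟨h.1, hg ω ω' h.2⟩
  · intro ω ω' h
    simp only [Prod.mk.injEq] at h ⊢
    exact ⟨h.1, hg' ω ω' h.2⟩

end Entropy

section Gibbs

variable {X Y Z : Type*} {w : Ω → ℝ}

lemma sum_mul_logb_le (hw : ∀ ω, 0 ≤ w ω) (R : Ω → ℝ) (hR : ∀ ω, 0 < w ω → 0 < R ω) :
    ∑ ω, w ω * Real.logb 2 (R ω) ≤ (∑ ω, w ω * R ω - ∑ ω, w ω) / Real.log 2 := by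
  rw [← Finset.sum_sub_distrib, Finset.sum_div]
  refine Finset.sum_le_sum fun ω _ => ?_
  rcases (hw ω).eq_or_lt with h0 | hpos
  · simp [← h0]
  · rw [Real.logb, ← mul_div_assoc, ← mul_sub_one]
    exact div_le_div_of_nonneg_right
      (mul_le_mul_of_nonneg_left (Real.log_le_sub_one_of_pos (hR ω hpos)) hpos.le)
      (Real.log_pos one_lt_two).le

lemma sum_mul_div_pr_le [Fintype X] (f : Ω → X) {Q : X → ℝ} (hQ : ∀ x, 0 ≤ Q x) :
    ∑ ω, w ω * (Q (f ω) / pr w f (f ω)) ≤ ∑ x, Q x := by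
  rw [← sum_pr_mul f fun x => Q x / pr w f x]
  refine Finset.sum_le_sum fun x _ => ?_
  rcases eq_or_ne (pr w f x) 0 with h | h
  · simp [h, hQ x]
  · rw [mul_div_cancel₀ _ h]

def condIndepLaw (w : Ω → ℝ) (f : Ω → X) (g : Ω → Y) (h : Ω → Z) (t : X × Y × Z) : ℝ :=
  pr w (fun ω => (f ω, h ω)) (t.1, t.2.2) * pr w (fun ω => (g ω, h ω)) t.2 / pr w h t.2.2

lemma condIndepLaw_nonneg (hw : ∀ ω, 0 ≤ w ω) (f : Ω → X) (g : Ω → Y) (h : Ω → Z)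
    (t : X × Y × Z) :
    0 ≤ condIndepLaw w f g h t :=
  div_nonneg (mul_nonneg (pr_nonneg hw _ _) (pr_nonneg hw _ _)) (pr_nonneg hw _ _)

lemma sum_condIndepLaw [Fintype X] [Fintype Y] [Fintype Z] (f : Ω → X) (g : Ω → Y)
    (h : Ω → Z) : ∑ t, condIndepLaw w f g h t = ∑ ω, w ω := by
  have hz : ∀ z, ∑ x, ∑ y, condIndepLaw w f g h (x, y, z) = pr w h z := by
    intro z
    simp_rw [condIndepLaw, ← Finset.sum_div, ← Finset.mul_sum, ← Finset.sum_mul,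
      sum_pr_pair_left]
    rcases eq_or_ne (pr w h z) 0 with h0 | h0
    · simp [h0]
    · exact mul_div_cancel_right₀ _ h0
  rw [← sum_pr h, ← Finset.sum_congr rfl fun z _ => hz z]
  simp only [Fintype.sum_prod_type]
  exact (Finset.sum_congr rfl fun x _ => Finset.sum_comm).trans Finset.sum_comm

lemma mul_logb_condIndepLaw_div (hw : ∀ ω, 0 ≤ w ω) (f : Ω → X) (g : Ω → Y) (h : Ω → Z)
    (ω : Ω) :
    w ω * Real.logb 2 (condIndepLaw w f g h (f ω, g ω, h ω)
        / pr w (fun ω => (f ω, g ω, h ω)) (f ω, g ω, h ω)) =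
      w ω * Real.logb 2 (pr w (fun ω => (f ω, h ω)) (f ω, h ω))
      + w ω * Real.logb 2 (pr w (fun ω => (g ω, h ω)) (g ω, h ω))
      - w ω * Real.logb 2 (pr w h (h ω))
      - w ω * Real.logb 2 (pr w (fun ω => (f ω, g ω, h ω)) (f ω, g ω, h ω)) := by
  rcases (hw ω).eq_or_lt with h0 | hω
  · simp [← h0]
  have hfh := pr_apply_pos hw (fun ω => (f ω, h ω)) hω
  have hgh := pr_apply_pos hw (fun ω => (g ω, h ω)) hω
  have hh := pr_apply_pos hw h hω
  have hfgh := pr_apply_pos hw (fun ω => (f ω, g ω, h ω)) hω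
  rw [condIndepLaw, Real.logb_div (by positivity) hfgh.ne', Real.logb_div (by positivity) hh.ne',
    Real.logb_mul hfh.ne' hgh.ne']
  ring

lemma condMI_nonneg [Fintype X] [Fintype Y] [Fintype Z] (hw : ∀ ω, 0 ≤ w ω)
    (f : Ω → X) (g : Ω → Y) (h : Ω → Z) : 0 ≤ condMI w f g h := by
  let T : Ω → X × Y × Z := fun ω => (f ω, g ω, h ω)
  have hpos : ∀ ω, 0 < w ω → 0 < condIndepLaw w f g h (T ω) / pr w T (T ω) := fun ω hω =>
    div_pos (div_pos (mul_pos (pr_apply_pos hw _ hω) (pr_apply_pos hw _ hω))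
      (pr_apply_pos hw _ hω)) (pr_apply_pos hw T hω)
  have hmass : ∑ ω, w ω * (condIndepLaw w f g h (T ω) / pr w T (T ω)) ≤ ∑ ω, w ω :=
    (sum_mul_div_pr_le T (condIndepLaw_nonneg hw f g h)).trans_eq (sum_condIndepLaw f g h)
  have hgibbs := (sum_mul_logb_le hw _ hpos).trans (div_nonpos_of_nonpos_of_nonneg
    (sub_nonpos.2 hmass) (Real.log_pos one_lt_two).le)
  simp only [T, mul_logb_condIndepLaw_div hw f g h, Finset.sum_sub_distrib,
    Finset.sum_add_distrib] at hgibbs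
  simp only [condMI, condH, H_eq_neg_sum_mul_logb_pr]
  linarith

end Gibbs

section Consequences

variable {X Y Z : Type*} {w : Ω → ℝ} [Fintype X] [Fintype Y] [Fintype Z]

lemma condMI_comm (hw : ∀ ω, 0 ≤ w ω) (f : Ω → X) (g : Ω → Y) (h : Ω → Z) :
    condMI w f g h = condMI w g f h := by
  have hswap : H w (fun ω => (f ω, g ω, h ω)) = H w (fun ω => (g ω, f ω, h ω)) :=
    H_congr hw (fun _ _ e => by simp_all [Prod.ext_iff]) (fun _ _ e => by simp_all [Prod.ext_iff])
  simp only [condMI, condH, hswap]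
  ring

lemma condH_anti (hw : ∀ ω, 0 ≤ w ω) (f : Ω → X) {g : Ω → Y} {g' : Ω → Z}
    (hg : Determines g' g) : condH w f g' ≤ condH w f g := by
  have hmore : condH w f g' = condH w f (fun ω => (g' ω, g ω)) :=
    condH_congr_right hw f (fun ω ω' e => by rw [e, hg ω ω' e])
      (fun _ _ e => congrArg Prod.fst e)
  have := condMI_nonneg hw f g' g
  rw [condMI] at this
  linarith

lemma condH_le_H (hw : IsPMF w) (f : Ω → X) (g : Ω → Y) : condH w f g ≤ H w f := by
  have hpair : H w (fun ω => (f ω, ())) = H w f :=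
    H_congr hw.1 (fun _ _ e => congrArg Prod.fst e) (fun _ _ e => by rw [e])
  have h := condH_anti hw.1 f (g := fun _ => ()) (g' := g) (fun _ _ _ => rfl)
  simp only [condH, hpair, H_const hw, sub_zero] at h ⊢
  exact h

end Consequences

section Independence

variable {X Y Z : Type*} {w : Ω → ℝ}

def IsIndep (w : Ω → ℝ) (u : Ω → X) (v : Ω → Y) : Prop :=
  ∀ x y, pr w (fun ω => (u ω, v ω)) (x, y) = pr w u x * pr w v y

lemma H_pair_of_isIndep [Fintype X] [Fintype Y] (hw : ∀ ω, 0 ≤ w ω) {u : Ω → X}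
    {v : Ω → Y} (huv : IsIndep w u v) : H w (fun ω => (u ω, v ω)) = H w u + H w v := by
  simp only [H_eq_neg_sum_mul_logb_pr, ← neg_add, ← Finset.sum_add_distrib, ← mul_add]
  refine congrArg _ (Finset.sum_congr rfl fun ω _ => ?_)
  rcases (hw ω).eq_or_lt with h0 | hω
  · simp [← h0]
  · rw [huv, Real.logb_mul (pr_apply_pos hw u hω).ne' (pr_apply_pos hw v hω).ne']

lemma condH_pair_of_isIndep [Fintype X] [Fintype Y] [Fintype Z] (hw : ∀ ω, 0 ≤ w ω)
    {f : Ω → X} {g : Ω → Y} {k : Ω → Z} (hfg : IsIndep w (fun ω => (f ω, g ω)) k)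
    (hg : IsIndep w g k) : condH w f (fun ω => (g ω, k ω)) = condH w f g := by
  have hassoc : H w (fun ω => (f ω, g ω, k ω)) = H w (fun ω => ((f ω, g ω), k ω)) :=
    H_congr hw (fun _ _ e => by simp_all [Prod.ext_iff]) (fun _ _ e => by simp_all [Prod.ext_iff])
  simp only [condH, hassoc, H_pair_of_isIndep hw hfg, H_pair_of_isIndep hw hg]
  ring

lemma pr_comp_equiv {Ω' : Type*} [Fintype Ω'] (e : Ω' ≃ Ω) (f : Ω → X) (x : X) :
    pr (fun ω' => w (e ω')) (fun ω' => f (e ω')) x = pr w f x := by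
  classical exact Equiv.sum_comp e fun ω => if f ω = x then w ω else 0

lemma IsIndep.comp_equiv {Ω' : Type*} [Fintype Ω'] (e : Ω' ≃ Ω) {u : Ω → X} {v : Ω → Y}
    (h : IsIndep w u v) :
    IsIndep (fun ω' => w (e ω')) (fun ω' => u (e ω')) (fun ω' => v (e ω')) := fun x y => by
  simpa only [← pr_comp_equiv e (fun ω => (u ω, v ω)), ← pr_comp_equiv e u,
    ← pr_comp_equiv e v] using h x y

lemma isIndep_fst_snd {α β : Type*} [Fintype α] [Fintype β] {p : α → ℝ} {q : β → ℝ}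
    (hp : ∑ a, p a = 1) (hq : ∑ b, q b = 1) (u : α → X) (v : β → Y) :
    IsIndep (fun ab : α × β => p ab.1 * q ab.2) (fun ab => u ab.1) (fun ab => v ab.2) := by
  classical
  intro x y
  have hF : ∀ a b, (if u a = x then p a * q b else 0) = (if u a = x then p a else 0) * q b :=
    fun a b => by rw [ite_mul, zero_mul]
  have hG : ∀ a b, (if v b = y then p a * q b else 0) = p a * (if v b = y then q b else 0) :=
    fun a b => by rw [mul_ite, mul_zero]
  have hFG : ∀ a b, (if (u a, v b) = (x, y) then p a * q b else 0)
      = (if u a = x then p a else 0) * (if v b = y then q b else 0) :=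
    fun a b => by simp only [ite_zero_mul_ite_zero, Prod.mk.injEq]
  simp only [pr, Fintype.sum_prod_type, hF, hG, hFG, ← Finset.sum_mul_sum, hp, hq, mul_one,
    one_mul]

end Independence

section Converse

variable {𝒜 ℬ ℰ 𝒲 : Type*} {n : ℕ}

/-- `Cₖ = ((Aⱼ, Eⱼ)_{j<k}, Bⁿ)`. -/
def auxC (n k : ℕ) (ω : Fin n → 𝒜 × ℬ × ℰ) :
    ({j : Fin n // (j : ℕ) < k} → 𝒜 × ℰ) × (Fin n → ℬ) :=
  (fun j => ((ω j).1, (ω j).2.2), Bn n ω)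

/-- `Cᵢ` without `Bᵢ`, as a function of the coordinates `j ≠ i` alone. -/
def restC (i : Fin n) (r : {j : Fin n // j ≠ i} → 𝒜 × ℬ × ℰ) :
    ({j : Fin n // (j : ℕ) < i} → 𝒜 × ℰ) × ({j : Fin n // j ≠ i} → ℬ) :=
  (fun j => ((r ⟨j, Fin.ne_of_lt j.2⟩).1, (r ⟨j, Fin.ne_of_lt j.2⟩).2.2), fun j => (r j).2.1)

lemma determines_auxV_of_auxC (i : Fin n) (f : (Fin n → 𝒜) → 𝒲) :
    Determines (fun ω : Fin n → 𝒜 × ℬ × ℰ => (f (An n ω), auxC n i ω))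
      (fun ω => (auxV n f i ω, (ω i).2.1)) := by
  intro ω ω' h
  simp only [auxV, auxC, Bn, Prod.ext_iff, funext_iff] at h ⊢
  exact ⟨⟨h.1, fun j => (h.2.1 ⟨j, j.2⟩).1, fun j => h.2.2 j, fun j => h.2.2 j,
    fun j => (h.2.1 ⟨j, j.2⟩).2⟩, h.2.2 i⟩

lemma determines_auxC_of_auxV (i : Fin n) (f : (Fin n → 𝒜) → 𝒲) :
    Determines (fun ω => (auxV n f i ω, (ω i).2.1))
      (fun ω : Fin n → 𝒜 × ℬ × ℰ => (f (An n ω), auxC n i ω)) := by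
  intro ω ω' h
  simp only [auxV, auxC, Bn, Prod.ext_iff, funext_iff] at h ⊢
  obtain ⟨⟨hW, hA, hBlt, hBgt, hE⟩, hBi⟩ := h
  refine ⟨hW, fun j => ⟨hA ⟨j, j.2⟩, hE ⟨j, j.2⟩⟩, fun j => ?_⟩
  rcases lt_trichotomy j i with hj | rfl | hj
  exacts [hBlt ⟨j, hj⟩, hBi, hBgt ⟨j, hj⟩]

lemma determines_of_auxC_succ (i : Fin n) :
    Determines (auxC (𝒜 := 𝒜) (ℬ := ℬ) (ℰ := ℰ) n ((i : ℕ) + 1))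
      (fun ω => ((ω i).1, auxC n i ω)) := by
  intro ω ω' h
  simp only [auxC, Bn, Prod.ext_iff, funext_iff] at h ⊢
  exact ⟨(h.1 ⟨i, Nat.lt_succ_self _⟩).1, fun j => h.1 ⟨j, Nat.lt_succ_of_lt j.2⟩, h.2⟩

lemma determines_restC_of_auxC (i : Fin n) :
    Determines (auxC (𝒜 := 𝒜) (ℬ := ℬ) (ℰ := ℰ) n i)
      (fun ω => ((ω i).2.1, restC i fun j => ω j)) := by
  intro ω ω' h
  simp only [restC, auxC, Bn, Prod.ext_iff, funext_iff] at h ⊢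
  exact ⟨h.2 i, fun j => h.1 ⟨j, j.2⟩, fun j => h.2 j⟩

lemma determines_auxC_of_restC (i : Fin n) :
    Determines (fun ω : Fin n → 𝒜 × ℬ × ℰ => ((ω i).2.1, restC i fun j => ω j))
      (auxC n i) := by
  intro ω ω' h
  simp only [restC, auxC, Bn, Prod.ext_iff, funext_iff] at h ⊢
  refine ⟨fun j => h.2.1 j, fun j => ?_⟩
  by_cases hj : j = i
  · exact hj ▸ h.1
  · exact h.2.2 ⟨j, hj⟩

section Iid

variable [Fintype 𝒜] [Fintype ℬ] [Fintype ℰ] [Fintype 𝒲] {p : 𝒜 × ℬ × ℰ → ℝ}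

lemma sum_prod_eq_one (hp : IsPMF p) (ι : Type*) [Fintype ι] [DecidableEq ι] :
    ∑ r : ι → 𝒜 × ℬ × ℰ, ∏ j, p (r j) = 1 := by
  simp [← Fintype.prod_sum fun _ => p, hp.2]

lemma iidW_isPMF (hp : IsPMF p) : IsPMF (iidW p n) :=
  ⟨fun _ => Finset.prod_nonneg fun _ _ => hp.1 _, sum_prod_eq_one hp (Fin n)⟩

lemma isIndep_iidW_apply_restrict (hp : IsPMF p) (i : Fin n) {S T : Type*}
    (X : 𝒜 × ℬ × ℰ → S) (Y : ({j : Fin n // j ≠ i} → 𝒜 × ℬ × ℰ) → T) :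
    IsIndep (iidW p n) (fun ω => X (ω i)) (fun ω => Y fun j => ω j) := by
  have hsplit : iidW p n = fun ω => p (ω i) * ∏ j : {j : Fin n // j ≠ i}, p (ω j) :=
    funext fun ω => Fintype.prod_eq_mul_prod_subtype_ne _ i
  rw [hsplit]
  exact (isIndep_fst_snd hp.2 (sum_prod_eq_one hp _) X Y).comp_equiv
    (Equiv.funSplitAt i (𝒜 × ℬ × ℰ))

lemma condH_apply_auxC (hp : IsPMF p) (i : Fin n) :
    condH (iidW p n) (fun ω => (ω i).1) (auxC n i) =
      condH (iidW p n) (fun ω => (ω i).1) (fun ω => (ω i).2.1) := by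
  have hw : ∀ ω, 0 ≤ iidW p n ω := (iidW_isPMF hp).1
  rw [condH_congr_right hw _ (determines_restC_of_auxC i) (determines_auxC_of_restC i)]
  exact condH_pair_of_isIndep hw (isIndep_iidW_apply_restrict hp i (fun t => (t.1, t.2.1)) _)
    (isIndep_iidW_apply_restrict hp i (fun t => t.2.1) _)

lemma condMI_auxV_eq (hp : IsPMF p) (f : (Fin n → 𝒜) → 𝒲) (i : Fin n) :
    condMI (iidW p n) (auxV n f i) (fun ω => (ω i).1) (fun ω => (ω i).2.1) =
      condMI (iidW p n) (fun ω => f (An n ω)) (fun ω => (ω i).1) (auxC n i) := by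
  have hw : ∀ ω, 0 ≤ iidW p n ω := (iidW_isPMF hp).1
  rw [condMI_comm hw, condMI, ← condH_apply_auxC hp, condH_congr_right hw _
    (determines_auxC_of_auxV i f) (determines_auxV_of_auxC i f), ← condMI, condMI_comm hw]

lemma condMI_auxC_le (hp : IsPMF p) (f : (Fin n → 𝒜) → 𝒲) (i : Fin n) :
    condMI (iidW p n) (fun ω => f (An n ω)) (fun ω => (ω i).1) (auxC n i) ≤
      condH (iidW p n) (fun ω => f (An n ω)) (auxC n i)
        - condH (iidW p n) (fun ω => f (An n ω)) (auxC n ((i : ℕ) + 1)) :=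
  sub_le_sub_left (condH_anti (iidW_isPMF hp).1 _ (determines_of_auxC_succ i)) _

end Iid

end Converse

/-- For an i.i.d. source `(Aᵢ,Bᵢ,Eᵢ)`, `W = f(Aⁿ)` and
`Vᵢ = (W, A^{i-1}, B^{i-1}, B_{i+1}ⁿ, E^{i-1})`, one has
`H(W) ≥ Σᵢ I(Vᵢ ; Aᵢ | Bᵢ)`. -/
theorem rate_converse_bound
    {𝒜 ℬ ℰ 𝒲 : Type*} [Fintype 𝒜] [Fintype ℬ] [Fintype ℰ] [Fintype 𝒲]
    (p : 𝒜 × ℬ × ℰ → ℝ) (hp : IsPMF p) (n : ℕ)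
    (f : (Fin n → 𝒜) → 𝒲) :
    ∑ i : Fin n, condMI (iidW p n) (auxV n f i)
        (fun ω => (ω i).1) (fun ω => (ω i).2.1)
      ≤ H (iidW p n) (fun ω => f (An n ω)) := by
  set w := iidW p n
  set W := fun ω => f (An n ω)
  have hw : IsPMF w := iidW_isPMF hp
  calc ∑ i : Fin n, condMI w (auxV n f i) (fun ω => (ω i).1) (fun ω => (ω i).2.1)
      ≤ ∑ i : Fin n, (condH w W (auxC n i) - condH w W (auxC n ((i : ℕ) + 1))) :=
        Finset.sum_le_sum fun i _ => (condMI_auxV_eq hp f i).trans_le (condMI_auxC_le hp f i)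
    _ = condH w W (auxC n 0) - condH w W (auxC n n) := by
        rw [Fin.sum_univ_eq_sum_range fun k => condH w W (auxC n k) - condH w W (auxC n (k + 1))]
        exact Finset.sum_range_sub' _ n
    _ ≤ H w W := by linarith [condH_le_H hw W (auxC n 0), condH_nonneg hw.1 W (auxC n n)]

end SLSC

end
end

section
/- Let (A_i, B_i, E_i), i = 1,…,n, be i.i.d. triples of random variables with values in finite sets 𝒜×ℬ×ℰ, let W = f(Aⁿ) for an arbitrary function f : 𝒜ⁿ → 𝒲 into a finite set, and for each i define U_i = (W, B_{i+1}ⁿ, E^{i−1}) and V_i = (W, A^{i−1}, B^{i−1}, B_{i+1}ⁿ, E^{i−1}). Then the equivocation satisfies the exact identity H(Aⁿ | W, Eⁿ) = Σ_{i=1}^n [ H(A_i | V_i, B_i) + I(A_i ; B_i | U_i) − I(A_i ; E_i | U_i) ]. -/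
noncomputable section

namespace SLSC

open scoped BigOperators

variable {Ω : Type*} [Fintype Ω]

variable {𝒜 ℬ ℰ : Type*} [Fintype 𝒜] [Fintype ℬ] [Fintype ℰ]

/-!
Every entropy in the identity is, up to relabelling, the entropy of `W` together with some
coordinates of the source. Two conditional independences turn each summand into a difference
of such entropies: `Aᵢ ⟂ E^{i-1}` given `(W, A^{i-1}, Bⁿ)`, and `Bᵢ, Eᵢ ⟂ A_{≠i}` given
`(W, Aᵢ, B_{i+1}ⁿ, E^{i-1})`. Both hold because, for a product source and a block `P` of
indices, revealing all of `A_P` makes the fibres of `W = f(Aⁿ)` rectangles with respect to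
the splitting of the coordinates into `P` and its complement. Then `H(Aᵢ | Vᵢ, Bᵢ)` telescopes
along `k ↦ H(W, A^{k-1}, Bⁿ)` to `H(Aⁿ | W, Bⁿ)`, and `I(Aᵢ;Bᵢ|Uᵢ) - I(Aᵢ;Eᵢ|Uᵢ)` telescopes
along `k ↦ H(Aⁿ | W, B_kⁿ, E^{k-1})` to `H(Aⁿ | W, Eⁿ) - H(Aⁿ | W, Bⁿ)`.
-/

section Entropy

variable {Ω X Y Z : Type*} [Fintype Ω]

open Classical in
lemma pr_mul (w : Ω → ℝ) (F : Ω → X) (x : X) (c : ℝ) :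
    pr w F x * c = ∑ ω, if F ω = x then w ω * c else 0 := by
  rw [pr, Finset.sum_mul]
  exact Finset.sum_congr rfl fun ω _ => by split_ifs <;> simp

open Classical in
lemma pr_mul_pr (w : Ω → ℝ) (F : Ω → X) (G : Ω → Y) (x : X) (y : Y) :
    pr w F x * pr w G y
      = ∑ q : Ω × Ω, if F q.1 = x ∧ G q.2 = y then w q.1 * w q.2 else 0 := by
  rw [pr, pr, Finset.sum_mul_sum, ← Finset.univ_product_univ, Finset.sum_product]
  refine Finset.sum_congr rfl fun ω _ => Finset.sum_congr rfl fun ω' _ => ?_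
  by_cases h : F ω = x <;> by_cases h' : G ω' = y <;> simp [h, h']

lemma le_pr_apply_self {w : Ω → ℝ} (hw : ∀ ω, 0 ≤ w ω) (F : Ω → X) (ω : Ω) :
    w ω ≤ pr w F (F ω) := by
  classical
  rw [pr]
  calc w ω = if F ω = F ω then w ω else 0 := by simp
    _ ≤ _ := Finset.single_le_sum (f := fun ω' => if F ω' = F ω then w ω' else 0)
        (fun ω' _ => by split_ifs <;> simp [hw ω']) (Finset.mem_univ ω)

lemma H_eq_neg_sum [Fintype X] (w : Ω → ℝ) (F : Ω → X) :
    H w F = -∑ ω, w ω * Real.logb 2 (pr w F (F ω)) := by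
  classical
  rw [H, neg_inj]
  simp_rw [pr_mul]
  rw [Finset.sum_comm]
  exact Finset.sum_congr rfl fun ω _ => by simp

lemma H_eq_of_same_fibres [Fintype X] [Fintype Y] (w : Ω → ℝ) {F : Ω → X} {G : Ω → Y}
    (h : ∀ ω ω', F ω = F ω' ↔ G ω = G ω') : H w F = H w G := by
  classical
  have hpr : ∀ ω, pr w F (F ω) = pr w G (G ω) := fun ω =>
    Finset.sum_congr rfl fun ω' _ => if_congr (h ω' ω) rfl rfl
  simp only [H_eq_neg_sum, hpr]

lemma condH_congr_right_s12 [Fintype X] [Fintype Y] [Fintype Z] (w : Ω → ℝ) (F : Ω → X)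
    {G : Ω → Y} {K : Ω → Z} (h : ∀ ω ω', G ω = G ω' ↔ K ω = K ω') :
    condH w F G = condH w F K := by
  rw [condH, condH, H_eq_of_same_fibres w h,
    H_eq_of_same_fibres w (G := fun ω => (F ω, K ω)) fun ω ω' => by simp only [Prod.mk.injEq, h]]

lemma Markov.H_add_H [Fintype X] [Fintype Y] [Fintype Z] {w : Ω → ℝ} (hw : ∀ ω, 0 ≤ w ω)
    {F : Ω → X} {G : Ω → Y} {K : Ω → Z} (h : Markov w F G K) :
    H w (fun ω => (F ω, G ω, K ω)) + H w G
      = H w (fun ω => (F ω, G ω)) + H w (fun ω => (G ω, K ω)) := by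
  simp only [H_eq_neg_sum, ← neg_add, ← Finset.sum_add_distrib, ← mul_add, neg_inj]
  refine Finset.sum_congr rfl fun ω _ => ?_
  rcases (hw ω).eq_or_lt with h0 | hpos
  · simp [← h0]
  rw [← Real.logb_mul, ← Real.logb_mul, h]
  all_goals exact (hpos.trans_le (le_pr_apply_self hw _ ω)).ne'

end Entropy

section Swap

variable {ι α X Y Z : Type*} [Fintype ι] [DecidableEq ι]

lemma prod_mul_prod_piecewise {M : Type*} [CommMonoid M] (μ : α → M) (P : Finset ι)
    (ω ω' : ι → α) :
    (∏ i, μ (ω i)) * ∏ i, μ (ω' i)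
      = (∏ i, μ (P.piecewise ω ω' i)) * ∏ i, μ (P.piecewise ω' ω i) := by
  simp only [← Finset.prod_mul_distrib]
  refine Finset.prod_congr rfl fun i _ => ?_
  by_cases hi : i ∈ P <;> simp [hi, mul_comm]

/-- Both sides of the Markov identity are sums over pairs of samples; exchanging the
`P`-coordinates of the two samples matches their terms. -/
lemma markov_of_swap_invariant [Fintype α] (w : (ι → α) → ℝ) (P : Finset ι)
    (hw : ∀ ω ω', w ω * w ω' = w (P.piecewise ω ω') * w (P.piecewise ω' ω))
    {F : (ι → α) → X} {G : (ι → α) → Y} {K : (ι → α) → Z}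
    (hF : ∀ ω ω', F (P.piecewise ω ω') = F ω)
    (hG : ∀ ω ω', G ω = G ω' → G (P.piecewise ω ω') = G ω)
    (hK : ∀ ω ω', K (P.piecewise ω ω') = K ω') :
    Markov w F G K := by
  classical
  intro x y z
  have hG_swap : ∀ ω ω', G ω = y ∧ G ω' = y →
      G (P.piecewise ω ω') = y ∧ G (P.piecewise ω' ω) = y := by
    rintro ω ω' ⟨h, h'⟩
    exact ⟨(hG ω ω' (h.trans h'.symm)).trans h, (hG ω' ω (h'.trans h.symm)).trans h'⟩
  rw [pr_mul_pr, pr_mul_pr]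
  let swap : (ι → α) × (ι → α) → (ι → α) × (ι → α) := fun q =>
    (P.piecewise q.1 q.2, P.piecewise q.2 q.1)
  have hswap : Function.Involutive swap := fun q => by simp [swap, Finset.piecewise_same]
  refine Fintype.sum_equiv hswap.toPerm _ _ fun ⟨ω, ω'⟩ => ?_
  simp only [Function.Involutive.coe_toPerm, swap, ← hw, Prod.mk.injEq, hF, hK]
  refine if_congr ?_ rfl rfl
  constructor
  · rintro ⟨⟨hx, hy, hz⟩, hy'⟩
    exact ⟨⟨hx, (hG_swap ω ω' ⟨hy, hy'⟩).1⟩, (hG_swap ω ω' ⟨hy, hy'⟩).2, hz⟩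
  · rintro ⟨⟨hx, hy⟩, hy', hz⟩
    have := hG_swap _ _ ⟨hy, hy'⟩
    simp only [Finset.piecewise_idem_left, Finset.piecewise_idem_right,
      Finset.piecewise_same] at this
    exact ⟨⟨hx, this.1, hz⟩, this.2⟩

end Swap

section Prefix

variable {n : ℕ}

def before (n k : ℕ) : Finset (Fin n) := {j | (j : ℕ) < k}

@[simp] lemma mem_before {k : ℕ} {j : Fin n} : j ∈ before n k ↔ (j : ℕ) < k := by
  simp [before]

@[simp] lemma before_zero (n : ℕ) : before n 0 = ∅ := by
  ext j
  simp

@[simp] lemma before_self (n : ℕ) : before n n = .univ := by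
  ext j
  simp

lemma before_union_singleton (i : Fin n) : before n i ∪ {i} = before n (i + 1) := by
  ext j
  simp only [Finset.mem_union, Finset.mem_singleton, mem_before, Fin.ext_iff]
  omega

lemma compl_before_succ_union_singleton (i : Fin n) :
    (before n (i + 1))ᶜ ∪ {i} = (before n i)ᶜ := by
  ext j
  simp only [Finset.mem_union, Finset.mem_singleton, Finset.mem_compl, mem_before, Fin.ext_iff]
  omega

lemma sum_fin_succ_sub (g : ℕ → ℝ) (n : ℕ) : ∑ i : Fin n, (g (i + 1) - g i) = g n - g 0 :=
  (Fin.sum_univ_eq_sum_range (fun k => g (k + 1) - g k) n).trans (Finset.sum_range_sub g n)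

end Prefix

section Source

variable {𝒜 ℬ ℰ 𝒲 : Type*} {n : ℕ}

/-- Its type depends on the three index sets, so `simp` cannot rewrite them: use `rw`. -/
def obs (f : (Fin n → 𝒜) → 𝒲) (sA sB sE : Finset (Fin n)) (ω : Fin n → 𝒜 × ℬ × ℰ) :
    𝒲 × (sA → 𝒜) × (sB → ℬ) × (sE → ℰ) :=
  (f (An n ω), fun j => (ω j).1, fun j => (ω j).2.1, fun j => (ω j).2.2)

lemma obs_eq_obs_iff {f : (Fin n → 𝒜) → 𝒲} {sA sB sE : Finset (Fin n)}
    {ω ω' : Fin n → 𝒜 × ℬ × ℰ} :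
    obs f sA sB sE ω = obs f sA sB sE ω' ↔ f (An n ω) = f (An n ω') ∧
      (∀ j ∈ sA, (ω j).1 = (ω' j).1) ∧ (∀ j ∈ sB, (ω j).2.1 = (ω' j).2.1) ∧
      ∀ j ∈ sE, (ω j).2.2 = (ω' j).2.2 := by
  simp [obs, funext_iff]

lemma iidW_nonneg {p : 𝒜 × ℬ × ℰ → ℝ} (hp : ∀ x, 0 ≤ p x) (ω : Fin n → 𝒜 × ℬ × ℰ) :
    0 ≤ iidW p n ω :=
  Finset.prod_nonneg fun _ _ => hp _

variable [Fintype 𝒜] [Fintype ℬ] [Fintype ℰ] [Fintype 𝒲]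

lemma H_obs_union_add_H_obs {p : 𝒜 × ℬ × ℰ → ℝ} (hp : ∀ x, 0 ≤ p x)
    (f : (Fin n → 𝒜) → 𝒲) {P sA sB sE xB xE yA : Finset (Fin n)} (hP : P ⊆ sA)
    (hxB : xB ⊆ P) (hxE : xE ⊆ P) (hyA : Disjoint P yA) :
    H (iidW p n) (obs f (sA ∪ yA) (sB ∪ xB) (sE ∪ xE)) + H (iidW p n) (obs f sA sB sE)
      = H (iidW p n) (obs f sA (sB ∪ xB) (sE ∪ xE)) + H (iidW p n) (obs f (sA ∪ yA) sB sE) := by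
  have hmarkov : Markov (iidW p n) (fun ω => (fun j : xB => (ω j).2.1, fun j : xE => (ω j).2.2))
      (obs f sA sB sE) (fun ω => fun j : yA => (ω j).1) := by
    refine markov_of_swap_invariant _ P (fun ω ω' => prod_mul_prod_piecewise p P ω ω')
      (fun ω ω' => ?_) (fun ω ω' h => ?_) (fun ω ω' => ?_)
    · simp [Finset.piecewise_eq_of_mem _ _ _ (hxB _), Finset.piecewise_eq_of_mem _ _ _ (hxE _)]
    · rw [obs_eq_obs_iff] at h ⊢
      obtain ⟨hW, hA, hB, hE⟩ := h
      have hAn : An n (P.piecewise ω ω') = An n ω' := funext fun j => by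
        by_cases hj : j ∈ P
        · simp [An, hj, hA j (hP hj)]
        · simp [An, hj]
      exact ⟨hAn ▸ hW.symm,
        fun j hj => P.piecewise_cases ω ω' (fun v : 𝒜 × ℬ × ℰ => v.1 = (ω j).1) rfl (hA j hj).symm,
        fun j hj => P.piecewise_cases ω ω' (fun v : 𝒜 × ℬ × ℰ => v.2.1 = (ω j).2.1) rfl
          (hB j hj).symm,
        fun j hj => P.piecewise_cases ω ω' (fun v : 𝒜 × ℬ × ℰ => v.2.2 = (ω j).2.2) rfl
          (hE j hj).symm⟩
    · funext j
      simp [Finset.piecewise_eq_of_notMem _ _ _ (Finset.disjoint_right.1 hyA j.2)]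
  convert hmarkov.H_add_H (iidW_nonneg hp) using 2
  all_goals
    refine H_eq_of_same_fibres _ fun ω ω' => ?_
    simp only [Prod.mk.injEq, obs_eq_obs_iff, funext_iff, Subtype.forall,
      Finset.forall_mem_union]
    tauto

lemma H_An_obs (p : 𝒜 × ℬ × ℰ → ℝ) (f : (Fin n → 𝒜) → 𝒲) (sB sE : Finset (Fin n)) :
    H (iidW p n) (fun ω => (An n ω, obs f ∅ sB sE ω)) = H (iidW p n) (obs f .univ sB sE) := by
  refine H_eq_of_same_fibres _ fun ω ω' => ?_
  simp only [Prod.mk.injEq, obs_eq_obs_iff, An, funext_iff]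
  grind

lemma condH_A_auxV (p : 𝒜 × ℬ × ℰ → ℝ) (hp : ∀ x, 0 ≤ p x) (f : (Fin n → 𝒜) → 𝒲) (i : Fin n) :
    condH (iidW p n) (fun ω => (ω i).1) (fun ω => (auxV n f i ω, (ω i).2.1))
      = H (iidW p n) (obs f (before n (i + 1)) .univ ∅)
        - H (iidW p n) (obs f (before n i) .univ ∅) := by
  have hAV : H (iidW p n) (fun ω => ((ω i).1, (auxV n f i ω, (ω i).2.1)))
      = H (iidW p n) (obs f (before n (i + 1)) .univ (before n i)) := by
    refine H_eq_of_same_fibres _ fun ω ω' => ?_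
    simp only [Prod.mk.injEq, obs_eq_obs_iff, auxV, funext_iff, Subtype.forall, mem_before,
      Finset.mem_univ, forall_const, Nat.lt_succ_iff, Fin.val_fin_le, Fin.val_fin_lt]
    grind
  have hV : H (iidW p n) (fun ω => (auxV n f i ω, (ω i).2.1))
      = H (iidW p n) (obs f (before n i) .univ (before n i)) := by
    refine H_eq_of_same_fibres _ fun ω ω' => ?_
    simp only [Prod.mk.injEq, obs_eq_obs_iff, auxV, funext_iff, Subtype.forall, mem_before,
      Finset.mem_univ, forall_const, Fin.val_fin_lt]
    grind
  -- `Aᵢ ⟂ E^{i-1}` given `(W, A^{i-1}, Bⁿ)`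
  have hindep := H_obs_union_add_H_obs hp f (P := before n i) (sB := .univ) (sE := ∅) (xB := ∅)
    (yA := {i}) subset_rfl (Finset.empty_subset _) subset_rfl (by simp)
  rw [Finset.union_empty, Finset.empty_union, before_union_singleton] at hindep
  rw [condH, hAV, hV]
  linarith

lemma condMI_sub_condMI_auxU (p : 𝒜 × ℬ × ℰ → ℝ) (hp : ∀ x, 0 ≤ p x)
    (f : (Fin n → 𝒜) → 𝒲) (i : Fin n) :
    condMI (iidW p n) (fun ω => (ω i).1) (fun ω => (ω i).2.1) (auxU n f i)
        - condMI (iidW p n) (fun ω => (ω i).1) (fun ω => (ω i).2.2) (auxU n f i)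
      = condH (iidW p n) (An n) (obs f ∅ (before n (i + 1))ᶜ (before n (i + 1)))
        - condH (iidW p n) (An n) (obs f ∅ (before n i)ᶜ (before n i)) := by
  have hBU : H (iidW p n) (fun ω => ((ω i).2.1, auxU n f i ω))
      = H (iidW p n) (obs f ∅ (before n i)ᶜ (before n i)) := by
    refine H_eq_of_same_fibres _ fun ω ω' => ?_
    simp only [Prod.mk.injEq, obs_eq_obs_iff, auxU, funext_iff, Subtype.forall, mem_before,
      Finset.mem_compl]
    grind
  have hEU : H (iidW p n) (fun ω => ((ω i).2.2, auxU n f i ω))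
      = H (iidW p n) (obs f ∅ (before n (i + 1))ᶜ (before n (i + 1))) := by
    refine H_eq_of_same_fibres _ fun ω ω' => ?_
    simp only [Prod.mk.injEq, obs_eq_obs_iff, auxU, funext_iff, Subtype.forall, mem_before,
      Finset.mem_compl]
    grind
  have hABU : H (iidW p n) (fun ω => ((ω i).1, ((ω i).2.1, auxU n f i ω)))
      = H (iidW p n) (obs f {i} (before n i)ᶜ (before n i)) := by
    refine H_eq_of_same_fibres _ fun ω ω' => ?_
    simp only [Prod.mk.injEq, obs_eq_obs_iff, auxU, funext_iff, Subtype.forall, mem_before,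
      Finset.mem_compl]
    grind
  have hAEU : H (iidW p n) (fun ω => ((ω i).1, ((ω i).2.2, auxU n f i ω)))
      = H (iidW p n) (obs f {i} (before n (i + 1))ᶜ (before n (i + 1))) := by
    refine H_eq_of_same_fibres _ fun ω ω' => ?_
    simp only [Prod.mk.injEq, obs_eq_obs_iff, auxU, funext_iff, Subtype.forall, mem_before,
      Finset.mem_compl]
    grind
  -- `Bᵢ ⟂ A_{≠i}` and `Eᵢ ⟂ A_{≠i}` given `(W, Aᵢ, B_{i+1}ⁿ, E^{i-1})`
  have hindepB := H_obs_union_add_H_obs hp f (P := {i}) (sB := (before n (i + 1))ᶜ)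
    (sE := before n i) (xE := ∅) (yA := {i}ᶜ) subset_rfl subset_rfl (Finset.empty_subset _)
    disjoint_compl_right
  have hindepE := H_obs_union_add_H_obs hp f (P := {i}) (sB := (before n (i + 1))ᶜ)
    (sE := before n i) (xB := ∅) (yA := {i}ᶜ) subset_rfl (Finset.empty_subset _) subset_rfl
    disjoint_compl_right
  rw [Finset.union_compl, Finset.union_empty, compl_before_succ_union_singleton] at hindepB
  rw [Finset.union_compl, Finset.union_empty, before_union_singleton] at hindepE
  simp only [condMI, condH, H_An_obs, hBU, hEU, hABU, hAEU]
  linarith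

lemma sum_condH_A_auxV (p : 𝒜 × ℬ × ℰ → ℝ) (hp : ∀ x, 0 ≤ p x) (f : (Fin n → 𝒜) → 𝒲) :
    ∑ i : Fin n, condH (iidW p n) (fun ω => (ω i).1) (fun ω => (auxV n f i ω, (ω i).2.1))
      = condH (iidW p n) (An n) (obs f ∅ .univ ∅) := by
  simp only [condH_A_auxV p hp, sum_fin_succ_sub fun k => H (iidW p n) (obs f (before n k) .univ ∅)]
  rw [before_self, before_zero, condH, H_An_obs]

lemma sum_condMI_sub_condMI_auxU (p : 𝒜 × ℬ × ℰ → ℝ) (hp : ∀ x, 0 ≤ p x)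
    (f : (Fin n → 𝒜) → 𝒲) :
    ∑ i : Fin n, (condMI (iidW p n) (fun ω => (ω i).1) (fun ω => (ω i).2.1) (auxU n f i)
        - condMI (iidW p n) (fun ω => (ω i).1) (fun ω => (ω i).2.2) (auxU n f i))
      = condH (iidW p n) (An n) (obs f ∅ ∅ .univ) - condH (iidW p n) (An n) (obs f ∅ .univ ∅) := by
  simp only [condMI_sub_condMI_auxU p hp,
    sum_fin_succ_sub fun k => condH (iidW p n) (An n) (obs f ∅ (before n k)ᶜ (before n k))]
  rw [before_self, before_zero, Finset.compl_univ, Finset.compl_empty]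

end Source

/-- For an i.i.d. source `(Aᵢ,Bᵢ,Eᵢ)`, `W = f(Aⁿ)`, `Uᵢ = (W, B_{i+1}ⁿ, E^{i-1})`
and `Vᵢ = (W, A^{i-1}, B^{i-1}, B_{i+1}ⁿ, E^{i-1})`, the equivocation satisfies
`H(Aⁿ | W, Eⁿ) = Σᵢ [H(Aᵢ|Vᵢ,Bᵢ) + I(Aᵢ;Bᵢ|Uᵢ) - I(Aᵢ;Eᵢ|Uᵢ)]`. -/
theorem equivocation_identity
    {𝒜 ℬ ℰ 𝒲 : Type*} [Fintype 𝒜] [Fintype ℬ] [Fintype ℰ] [Fintype 𝒲]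
    (p : 𝒜 × ℬ × ℰ → ℝ) (hp : IsPMF p) (n : ℕ)
    (f : (Fin n → 𝒜) → 𝒲) :
    condH (iidW p n) (An n) (fun ω => (f (An n ω), En n ω))
      = ∑ i : Fin n,
          (condH (iidW p n) (fun ω => (ω i).1)
              (fun ω => (auxV n f i ω, (ω i).2.1))
            + condMI (iidW p n) (fun ω => (ω i).1) (fun ω => (ω i).2.1) (auxU n f i)
            - condMI (iidW p n) (fun ω => (ω i).1) (fun ω => (ω i).2.2) (auxU n f i)) := by
  calc condH (iidW p n) (An n) (fun ω => (f (An n ω), En n ω))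
      = condH (iidW p n) (An n) (obs f ∅ ∅ .univ) :=
        condH_congr_right_s12 _ _ fun ω ω' => by simp [obs_eq_obs_iff, En, funext_iff]
    _ = ∑ i : Fin n, condH (iidW p n) (fun ω => (ω i).1) (fun ω => (auxV n f i ω, (ω i).2.1))
          + ∑ i : Fin n,
            (condMI (iidW p n) (fun ω => (ω i).1) (fun ω => (ω i).2.1) (auxU n f i)
              - condMI (iidW p n) (fun ω => (ω i).1) (fun ω => (ω i).2.2) (auxU n f i)) := by
        rw [sum_condH_A_auxV p hp.1, sum_condMI_sub_condMI_auxU p hp.1]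
        ring
    _ = _ := by
        rw [← Finset.sum_add_distrib]
        simp only [add_sub_assoc]

end SLSC

end
end

section
/- More capable comparison of BEC and BSC: let p ∈ [0,1/2] and ε ∈ [0,1] with ε ≤ h₂(p). Then for every distribution of the {0,1}-valued random variable A, with B = BEC(ε)(A) and E = BSC(p)(A), one has I(A;B) ≥ I(A;E). Conversely, if ε > h₂(p) and A is uniform on {0,1}, then I(A;B) = 1 − ε < 1 − h₂(p) = I(A;E), so B fails to be more capable than E. -/
noncomputable section

namespace SLSC

open scoped BigOperators

variable {Ω : Type*} [Fintype Ω]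

variable {𝒜 ℬ ℰ : Type*} [Fintype 𝒜] [Fintype ℬ] [Fintype ℰ]

/-!
If `A` is `true` with probability `q`, then `I(A;B) = (1 - ε) h₂(q)` and
`I(A;E) = h₂(p ⋆ q) - h₂(p)`, so the first claim follows from
`h₂(p ⋆ q) ≤ h₂(p) + (1 - h₂(p)) h₂(q)`. By the symmetries `p ↦ 1 - p` and `q ↦ 1 - q` it
suffices to take `p, q ≤ 1/2`. In natural-log units the gap `G(q)` between the two sides vanishes
at `q = 0` and at `q = 1/2`, where also `G'(1/2) = 0`, and `G''(q)` has the sign of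
`h(p) (1 - 2p)² q (1 - q) - (log 2 - h(p)) p (1 - p)`, which increases on `[0, 1/2]`. So `G` is
concave and then convex there: the convex piece lies above its horizontal tangent at `1/2`, and the
concave piece lies above the chord between two nonnegative values. For the uniform input the two
informations are `1 - ε` and `1 - h₂(p)`.
-/

open Real Set

lemma h2_eq_binEntropy_div_log_two (x : ℝ) : h2 x = binEntropy x / log 2 := by
  rw [h2, binEntropy, logb, logb, log_inv, log_inv]; ring

lemma h2_one_sub (x : ℝ) : h2 (1 - x) = h2 x := by
  simp [h2_eq_binEntropy_div_log_two]

lemma h2_two_inv : h2 2⁻¹ = 1 := by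
  have : log 2 ≠ 0 := (log_pos one_lt_two).ne'
  rw [h2_eq_binEntropy_div_log_two, binEntropy_two_inv, div_self this]

lemma h2_nonneg {x : ℝ} (h0 : 0 ≤ x) (h1 : x ≤ 1) : 0 ≤ h2 x := by
  rw [h2_eq_binEntropy_div_log_two]
  exact div_nonneg (binEntropy_nonneg h0 h1) (log_nonneg one_le_two)

lemma sop_one_sub_left (a b : ℝ) : sop (1 - a) b = 1 - sop a b := by
  unfold sop; ring

lemma sop_one_sub_right (a b : ℝ) : sop a (1 - b) = 1 - sop a b := by
  unfold sop; ring

lemma sop_two_inv_right (a : ℝ) : sop a 2⁻¹ = 2⁻¹ := by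
  unfold sop; ring

lemma hasDerivAt_sop_right (a x : ℝ) : HasDerivAt (sop a) (1 - 2 * a) x := by
  have h : sop a = fun y => a + (1 - 2 * a) * y := by ext y; unfold sop; ring
  rw [h]
  simpa using ((hasDerivAt_id x).const_mul (1 - 2 * a)).const_add a

lemma hasDerivAt_log_one_sub_sub_log {x : ℝ} (h0 : 0 < x) (h1 : x < 1) :
    HasDerivAt (fun y => log (1 - y) - log y) (-(x * (1 - x))⁻¹) x := by
  have h : HasDerivAt (fun y => log (1 - y) - log y) (-1 / (1 - x) - x⁻¹) x :=
    (((hasDerivAt_id x).const_sub 1).log (by simp; linarith)).sub (hasDerivAt_log h0.ne')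
  convert h using 1
  have : 1 - x ≠ 0 := by linarith
  field_simp
  ring

lemma _root_.MonotoneOn.exists_nonpos_nonneg {g : ℝ → ℝ} {a b : ℝ} (hg : MonotoneOn g (Icc a b))
    (hgc : ContinuousOn g (Icc a b)) (hab : a ≤ b) (ha : g a ≤ 0) :
    ∃ m ∈ Icc a b, (∀ x ∈ Ioo a m, g x ≤ 0) ∧ ∀ x ∈ Ioo m b, 0 ≤ g x := by
  by_cases hb : g b ≤ 0
  · refine ⟨b, right_mem_Icc.2 hab, fun x hx => ?_, fun x hx => absurd hx.2 hx.1.not_gt⟩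
    exact (hg (Ioo_subset_Icc_self hx) (right_mem_Icc.2 hab) hx.2.le).trans hb
  · obtain ⟨m, hm, hgm⟩ := intermediate_value_Icc hab hgc ⟨ha, (not_le.1 hb).le⟩
    refine ⟨m, hm, fun x hx => ?_, fun x hx => ?_⟩
    · exact hgm ▸ hg ⟨hx.1.le, hx.2.le.trans hm.2⟩ hm hx.2.le
    · exact hgm ▸ hg hm ⟨hm.1.trans hx.1.le, hx.2.le⟩ hx.1.le

lemma nonneg_of_concave_then_convex {f f' f'' : ℝ → ℝ} {a m b : ℝ} (hm : m ∈ Icc a b)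
    (hf : ContinuousOn f (Icc a b)) (hf' : ∀ x ∈ Ioc a b, HasDerivAt f (f' x) x)
    (hf'' : ∀ x ∈ Ioo a b, HasDerivAt f' (f'' x) x)
    (hconc : ∀ x ∈ Ioo a m, f'' x ≤ 0) (hconv : ∀ x ∈ Ioo m b, 0 ≤ f'' x)
    (ha : 0 ≤ f a) (hb : 0 ≤ f b) (hb' : f' b = 0) :
    ∀ x ∈ Icc a b, 0 ≤ f x := by
  have hconvex : ConvexOn ℝ (Icc m b) f := by
    refine convexOn_of_hasDerivWithinAt2_nonneg (f' := f') (f'' := f'') (convex_Icc m b)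
      (hf.mono (Icc_subset_Icc_left hm.1)) (fun x hx => ?_) (fun x hx => ?_) (fun x hx => ?_)
      <;> rw [interior_Icc] at hx
    · exact (hf' x ⟨hm.1.trans_lt hx.1, hx.2.le⟩).hasDerivWithinAt
    · exact (hf'' x ⟨hm.1.trans_lt hx.1, hx.2⟩).hasDerivWithinAt
    · exact hconv x hx
  have hconcave : ConcaveOn ℝ (Icc a m) f := by
    refine concaveOn_of_hasDerivWithinAt2_nonpos (f' := f') (f'' := f'') (convex_Icc a m)
      (hf.mono (Icc_subset_Icc_right hm.2)) (fun x hx => ?_) (fun x hx => ?_) (fun x hx => ?_)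
      <;> rw [interior_Icc] at hx
    · exact (hf' x ⟨hx.1, hx.2.le.trans hm.2⟩).hasDerivWithinAt
    · exact (hf'' x ⟨hx.1, hx.2.trans_le hm.2⟩).hasDerivWithinAt
    · exact hconc x hx
  -- on `[m, b]`, `f` lies above its horizontal tangent at `b`
  have hright : ∀ x ∈ Icc m b, 0 ≤ f x := by
    intro x hx
    rcases hx.2.eq_or_lt with rfl | hxb
    · exact hb
    have hslope := hconvex.slope_le_of_hasDerivAt hx (right_mem_Icc.2 (hx.1.trans hxb.le)) hxb
      (hf' b ⟨(hm.1.trans hx.1).trans_lt hxb, le_rfl⟩)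
    rw [hb', slope_def_field, div_nonpos_iff] at hslope
    rcases hslope with h | h <;> linarith [h.1, h.2]
  intro x hx
  rcases le_total x m with hxm | hmx
  · exact (le_min ha (hright m ⟨le_rfl, hm.2⟩)).trans
      (hconcave.min_le_of_mem_Icc (left_mem_Icc.2 hm.1) (right_mem_Icc.2 hm.1) ⟨hx.1, hxm⟩)
  · exact hright x ⟨hmx, hx.2⟩

/-- Equals `log 2 ^ 2 * (h2 p + (1 - h2 p) * h2 x - h2 (sop p x))`. -/
def entropyGap (p x : ℝ) : ℝ :=
  (log 2 - binEntropy p) * binEntropy x + log 2 * binEntropy p - log 2 * binEntropy (sop p x)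

def entropyGapDeriv (p x : ℝ) : ℝ :=
  (log 2 - binEntropy p) * (log (1 - x) - log x)
    - log 2 * (1 - 2 * p) * (log (1 - sop p x) - log (sop p x))

lemma hasDerivAt_entropyGap {p x : ℝ} (hx : x ∈ Ioo 0 1) (hs : sop p x ∈ Ioo 0 1) :
    HasDerivAt (entropyGap p) (entropyGapDeriv p x) x := by
  have hH := hasDerivAt_binEntropy hx.1.ne' hx.2.ne
  have hHs := (hasDerivAt_binEntropy hs.1.ne' hs.2.ne).comp x (hasDerivAt_sop_right p x)
  exact (((hH.const_mul (log 2 - binEntropy p)).add_const (log 2 * binEntropy p)).sub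
    (hHs.const_mul (log 2))).congr_deriv (by unfold entropyGapDeriv; ring)

lemma hasDerivAt_entropyGapDeriv {p x : ℝ} (hx : x ∈ Ioo 0 1) (hs : sop p x ∈ Ioo 0 1) :
    HasDerivAt (entropyGapDeriv p)
      ((binEntropy p * (1 - 2 * p) ^ 2 * (x * (1 - x)) - (log 2 - binEntropy p) * (p * (1 - p)))
        / (x * (1 - x) * (sop p x * (1 - sop p x)))) x := by
  have hL := hasDerivAt_log_one_sub_sub_log hx.1 hx.2
  have hLs := (hasDerivAt_log_one_sub_sub_log hs.1 hs.2).comp x (hasDerivAt_sop_right p x)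
  refine ((hL.const_mul (log 2 - binEntropy p)).sub
    (hLs.const_mul (log 2 * (1 - 2 * p)))).congr_deriv ?_
  have : 1 - x ≠ 0 := by linarith [hx.2]
  have : 1 - sop p x ≠ 0 := by linarith [hs.2]
  have : sop p x ≠ 0 := hs.1.ne'
  have : x ≠ 0 := hx.1.ne'
  -- the numerator comes from `s (1 - s) = p (1 - p) + (1 - 2p)² x (1 - x)` for `s = sop p x`
  field_simp
  unfold sop
  ring

lemma continuous_entropyGap (p : ℝ) : Continuous (entropyGap p) := by
  unfold entropyGap sop; fun_prop

lemma entropyGap_zero (p : ℝ) : entropyGap p 0 = 0 := by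
  simp [entropyGap, sop]

lemma entropyGap_two_inv (p : ℝ) : entropyGap p 2⁻¹ = 0 := by
  simp only [entropyGap, sop_two_inv_right, binEntropy_two_inv]; ring

lemma entropyGapDeriv_two_inv (p : ℝ) : entropyGapDeriv p 2⁻¹ = 0 := by
  simp only [entropyGapDeriv, sop_two_inv_right]; norm_num

lemma sop_mem_Ioo {p x : ℝ} (hp : p ∈ Icc 0 2⁻¹) (hx : x ∈ Ioc 0 2⁻¹) : sop p x ∈ Ioo 0 1 := by
  unfold sop
  constructor <;> nlinarith [hp.1, hp.2, hx.1, hx.2]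

lemma entropyGap_nonneg {p x : ℝ} (hp : p ∈ Icc 0 2⁻¹) (hx : x ∈ Icc 0 2⁻¹) :
    0 ≤ entropyGap p x := by
  set N : ℝ → ℝ := fun y =>
    binEntropy p * (1 - 2 * p) ^ 2 * (y * (1 - y)) - (log 2 - binEntropy p) * (p * (1 - p))
  have hNmono : MonotoneOn N (Icc 0 2⁻¹) := by
    intro y hy z hz hyz
    have hy_le : y * (1 - y) ≤ z * (1 - z) := by nlinarith [hy.1, hz.2]
    have : 0 ≤ binEntropy p * (1 - 2 * p) ^ 2 :=
      mul_nonneg (binEntropy_nonneg hp.1 (by linarith [hp.2])) (sq_nonneg _)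
    simp only [N]
    linarith [mul_le_mul_of_nonneg_left hy_le this]
  have hN0 : N 0 ≤ 0 := by
    have : 0 ≤ (log 2 - binEntropy p) * (p * (1 - p)) :=
      mul_nonneg (sub_nonneg.2 binEntropy_le_log_two) (mul_nonneg hp.1 (by linarith [hp.2]))
    simpa [N] using this
  obtain ⟨m, hm, hNneg, hNpos⟩ :=
    hNmono.exists_nonpos_nonneg (by fun_prop) (by norm_num) hN0
  set D : ℝ → ℝ := fun y => y * (1 - y) * (sop p y * (1 - sop p y))
  have hx01 : ∀ y ∈ Ioc (0 : ℝ) 2⁻¹, y ∈ Ioo 0 1 := fun y hy => ⟨hy.1, by linarith [hy.2]⟩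
  have hD : ∀ y ∈ Ioc (0 : ℝ) 2⁻¹, 0 < D y := by
    intro y hy
    have hs := sop_mem_Ioo hp hy
    have hy1 := hx01 y hy
    exact mul_pos (mul_pos hy1.1 (by linarith [hy1.2])) (mul_pos hs.1 (by linarith [hs.2]))
  refine nonneg_of_concave_then_convex (f'' := fun y => N y / D y) hm
    (continuous_entropyGap p).continuousOn
    (fun y hy => hasDerivAt_entropyGap (hx01 y hy) (sop_mem_Ioo hp hy))
    (fun y hy => hasDerivAt_entropyGapDeriv (hx01 y (Ioo_subset_Ioc_self hy))
      (sop_mem_Ioo hp (Ioo_subset_Ioc_self hy)))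
    (fun y hy => div_nonpos_of_nonpos_of_nonneg (hNneg y hy) (hD y ⟨hy.1, hy.2.le.trans hm.2⟩).le)
    (fun y hy => div_nonneg (hNpos y hy) (hD y ⟨hm.1.trans_lt hy.1, hy.2.le⟩).le)
    (entropyGap_zero p).ge (entropyGap_two_inv p).ge (entropyGapDeriv_two_inv p) x hx

lemma h2_sop_le {p q : ℝ} (hp : p ∈ Icc 0 1) (hq : q ∈ Icc 0 1) :
    h2 (sop p q) ≤ h2 p + (1 - h2 p) * h2 q := by
  wlog hp2 : p ≤ 2⁻¹ generalizing p
  · have := this (p := 1 - p) ⟨by linarith [hp.2], by linarith [hp.1]⟩ (by linarith)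
    simpa only [sop_one_sub_left, h2_one_sub] using this
  wlog hq2 : q ≤ 2⁻¹ generalizing q
  · have := this (q := 1 - q) ⟨by linarith [hq.2], by linarith [hq.1]⟩ (by linarith)
    simpa only [sop_one_sub_right, h2_one_sub] using this
  have hgap := entropyGap_nonneg ⟨hp.1, hp2⟩ ⟨hq.1, hq2⟩
  have hL : 0 < log 2 := log_pos one_lt_two
  have h : h2 p + (1 - h2 p) * h2 q - h2 (sop p q) = entropyGap p q / log 2 ^ 2 := by
    simp only [h2_eq_binEntropy_div_log_two, entropyGap]
    field_simp
    ring
  linarith [div_nonneg hgap (sq_nonneg (log 2))]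

section Information

variable {X Y : Type*} [Fintype X]

lemma H_eq_sum_negMulLog (w : Ω → ℝ) (f : Ω → X) :
    H w f = (∑ x, negMulLog (pr w f x)) / log 2 := by
  simp only [H, negMulLog, logb, Finset.sum_div, ← Finset.sum_neg_distrib]
  congr 1; ext x; ring

lemma pr_id (v : X → ℝ) (x : X) : pr v (fun x => x) x = v x := by
  classical
  simp [pr]

lemma pr_pr (w : Ω → ℝ) (f : Ω → X) (φ : X → Y) (y : Y) :
    pr (pr w f) φ y = pr w (fun ω => φ (f ω)) y := by
  classical
  simp only [pr, ← Finset.sum_filter]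
  rw [Finset.sum_comm' (t' := Finset.univ.filter fun ω => φ (f ω) = y)
    (s' := fun ω => {f ω})]
  · simp
  · intro x ω
    simp only [Finset.mem_filter, Finset.mem_univ, true_and, Finset.mem_singleton]
    constructor
    · rintro ⟨h, rfl⟩; exact ⟨rfl, h⟩
    · rintro ⟨rfl, h⟩; exact ⟨h, rfl⟩

lemma H_pr [Fintype Y] (w : Ω → ℝ) (f : Ω → X) (φ : X → Y) :
    H (pr w f) φ = H w (fun ω => φ (f ω)) := by
  simp only [H, pr_pr]

lemma MI_pr {Z : Type*} [Fintype Y] [Fintype Z] (w : Ω → ℝ) (f : Ω → X) (φ : X → Y) (ψ : X → Z) :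
    MI (pr w f) φ ψ = MI w (fun ω => φ (f ω)) (fun ω => ψ (f ω)) := by
  simp only [MI, H_pr]

section Channel

variable (q : X → ℝ) (W : X → Y → ℝ)

lemma pr_fst_channel [Fintype Y] (hW : ∀ a, ∑ y, W a y = 1) (a : X) :
    pr (fun x : X × Y => q x.1 * W x.1 x.2) Prod.fst a = q a := by
  classical
  simp [pr, Fintype.sum_prod_type, ← Finset.mul_sum, hW]

lemma pr_snd_channel [Fintype Y] (y : Y) :
    pr (fun x : X × Y => q x.1 * W x.1 x.2) Prod.snd y = ∑ a, q a * W a y := by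
  classical
  simp [pr, Fintype.sum_prod_type]

lemma MI_channel [Fintype Y] (hW : ∀ a, ∑ y, W a y = 1) :
    MI (fun x : X × Y => q x.1 * W x.1 x.2) Prod.fst Prod.snd
      = (∑ y, negMulLog (∑ a, q a * W a y) - ∑ a, q a * ∑ y, negMulLog (W a y)) / log 2 := by
  simp only [MI, H_eq_sum_negMulLog, pr_fst_channel q W hW, pr_snd_channel, Prod.mk.eta, pr_id,
    Fintype.sum_prod_type, negMulLog_mul, Finset.sum_add_distrib, ← Finset.sum_mul, hW,
    ← Finset.mul_sum]
  ring

end Channel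

section TwoChannels

variable (q : 𝒜 → ℝ) (W₁ : 𝒜 → ℬ → ℝ) (W₂ : 𝒜 → ℰ → ℝ)

lemma pr_fst_snd_snd (hW₁ : ∀ a, ∑ b, W₁ a b = 1) (x : 𝒜 × ℰ) :
    pr (fun x : 𝒜 × ℬ × ℰ => q x.1 * W₁ x.1 x.2.1 * W₂ x.1 x.2.2) (fun ω => (ω.1, ω.2.2)) x
      = q x.1 * W₂ x.1 x.2 := by
  classical
  obtain ⟨a, e⟩ := x
  simp [pr, Fintype.sum_prod_type, ite_and, mul_right_comm _ (W₁ _ _),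
    ← Finset.mul_sum, hW₁]

lemma pr_fst_snd_fst (hW₂ : ∀ a, ∑ e, W₂ a e = 1) (x : 𝒜 × ℬ) :
    pr (fun x : 𝒜 × ℬ × ℰ => q x.1 * W₁ x.1 x.2.1 * W₂ x.1 x.2.2) (fun ω => (ω.1, ω.2.1)) x
      = q x.1 * W₁ x.1 x.2 := by
  classical
  obtain ⟨a, b⟩ := x
  simp [pr, Fintype.sum_prod_type, ite_and, ← Finset.mul_sum, hW₂]

lemma MI_fst_snd_snd (hW₁ : ∀ a, ∑ b, W₁ a b = 1) (hW₂ : ∀ a, ∑ e, W₂ a e = 1) :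
    MI (fun x : 𝒜 × ℬ × ℰ => q x.1 * W₁ x.1 x.2.1 * W₂ x.1 x.2.2) (fun ω => ω.1) (fun ω => ω.2.2)
      = (∑ e, negMulLog (∑ a, q a * W₂ a e) - ∑ a, q a * ∑ e, negMulLog (W₂ a e)) / log 2 := by
  rw [← MI_channel q W₂ hW₂, ← funext (pr_fst_snd_snd q W₁ W₂ hW₁), MI_pr]

lemma MI_fst_snd_fst (hW₁ : ∀ a, ∑ b, W₁ a b = 1) (hW₂ : ∀ a, ∑ e, W₂ a e = 1) :
    MI (fun x : 𝒜 × ℬ × ℰ => q x.1 * W₁ x.1 x.2.1 * W₂ x.1 x.2.2) (fun ω => ω.1) (fun ω => ω.2.1)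
      = (∑ b, negMulLog (∑ a, q a * W₁ a b) - ∑ a, q a * ∑ b, negMulLog (W₁ a b)) / log 2 := by
  rw [← MI_channel q W₁ hW₁, ← funext (pr_fst_snd_fst q W₁ W₂ hW₂), MI_pr]

end TwoChannels

end Information

lemma sum_BSC (p : ℝ) (a : Bool) : ∑ e, BSC p a e = 1 := by
  cases a <;> simp [BSC]

lemma sum_BEC (ε : ℝ) (a : Bool) : ∑ b, BEC ε a b = 1 := by
  cases a <;> simp [BEC, Fintype.sum_option]

lemma sum_negMulLog_BSC (p : ℝ) (a : Bool) : ∑ e, negMulLog (BSC p a e) = binEntropy p := by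
  cases a <;> simp [BSC, binEntropy_eq_negMulLog_add_negMulLog_one_sub, add_comm]

lemma sum_negMulLog_BEC (ε : ℝ) (a : Bool) : ∑ b, negMulLog (BEC ε a b) = binEntropy ε := by
  cases a <;>
    simp [BEC, Fintype.sum_option, binEntropy_eq_negMulLog_add_negMulLog_one_sub, add_comm]

lemma sum_negMulLog_BSC_output (p : ℝ) {q : Bool → ℝ} (hq : ∑ a, q a = 1) :
    ∑ e, negMulLog (∑ a, q a * BSC p a e) = binEntropy (sop p (q true)) := by
  have hf : q false = 1 - q true := by rw [Fintype.sum_bool] at hq; linarith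
  simp [BSC, sop, hf, binEntropy_eq_negMulLog_add_negMulLog_one_sub]
  congr 2 <;> ring

lemma sum_negMulLog_BEC_output (ε : ℝ) {q : Bool → ℝ} (hq : ∑ a, q a = 1) :
    ∑ b, negMulLog (∑ a, q a * BEC ε a b)
      = binEntropy ε + (1 - ε) * binEntropy (q true) := by
  have hf : q false = 1 - q true := by rw [Fintype.sum_bool] at hq; linarith
  simp [BEC, Fintype.sum_option, hf, binEntropy_eq_negMulLog_add_negMulLog_one_sub, negMulLog_mul]
  rw [← add_mul, add_sub_cancel, one_mul]
  ring

lemma MI_fst_snd_snd_BEC_BSC (p ε : ℝ) {q : Bool → ℝ} (hq : ∑ a, q a = 1) :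
    MI (fun x : Bool × Option Bool × Bool => q x.1 * BEC ε x.1 x.2.1 * BSC p x.1 x.2.2)
      (fun ω => ω.1) (fun ω => ω.2.2) = h2 (sop p (q true)) - h2 p := by
  rw [MI_fst_snd_snd q (BEC ε) (BSC p) (sum_BEC ε) (sum_BSC p), sum_negMulLog_BSC_output p hq]
  simp only [sum_negMulLog_BSC, ← Finset.sum_mul, hq, one_mul, h2_eq_binEntropy_div_log_two,
    sub_div]

lemma MI_fst_snd_fst_BEC_BSC (p ε : ℝ) {q : Bool → ℝ} (hq : ∑ a, q a = 1) :
    MI (fun x : Bool × Option Bool × Bool => q x.1 * BEC ε x.1 x.2.1 * BSC p x.1 x.2.2)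
      (fun ω => ω.1) (fun ω => ω.2.1) = (1 - ε) * h2 (q true) := by
  rw [MI_fst_snd_fst q (BEC ε) (BSC p) (sum_BEC ε) (sum_BSC p), sum_negMulLog_BEC_output ε hq]
  simp only [sum_negMulLog_BEC, ← Finset.sum_mul, hq, one_mul, h2_eq_binEntropy_div_log_two]
  ring

theorem bec_more_capable_than_bsc_general (p ε : ℝ)
    (hp : p ∈ Set.Icc (0 : ℝ) (1 / 2)) :
    (ε ≤ h2 p → ∀ qA : Bool → ℝ, IsPMF qA →
      MI (fun x : Bool × Option Bool × Bool => qA x.1 * BEC ε x.1 x.2.1 * BSC p x.1 x.2.2)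
          (fun ω => ω.1) (fun ω => ω.2.2)
        ≤ MI (fun x : Bool × Option Bool × Bool => qA x.1 * BEC ε x.1 x.2.1 * BSC p x.1 x.2.2)
          (fun ω => ω.1) (fun ω => ω.2.1)) ∧
    (h2 p < ε →
      MI (binSrc p ε) (fun ω => ω.1) (fun ω => ω.2.1) = 1 - ε ∧
      (1 - ε : ℝ) < 1 - h2 p ∧
      1 - h2 p = MI (binSrc p ε) (fun ω => ω.1) (fun ω => ω.2.2)) := by
  refine ⟨fun hεp q ⟨hq0, hq⟩ => ?_, fun hεp => ?_⟩
  · have hq1 : q true ≤ 1 := by rw [Fintype.sum_bool] at hq; linarith [hq0 false]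
    rw [MI_fst_snd_snd_BEC_BSC p ε hq, MI_fst_snd_fst_BEC_BSC p ε hq]
    have hsop := h2_sop_le ⟨hp.1, by linarith [hp.2]⟩ ⟨hq0 true, hq1⟩
    linarith [mul_le_mul_of_nonneg_right (sub_le_sub_left hεp 1) (h2_nonneg (hq0 true) hq1)]
  · have hu : ∑ _ : Bool, (1 / 2 : ℝ) = 1 := by norm_num
    refine ⟨(MI_fst_snd_fst_BEC_BSC p ε hu).trans ?_, by linarith,
      ((MI_fst_snd_snd_BEC_BSC p ε hu).trans ?_).symm⟩
    · simp [h2_two_inv]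
    · simp [sop_two_inv_right, h2_two_inv]

/-- **More capable comparison of BEC and BSC**: if `ε ≤ h₂(p)` then `I(A;B) ≥ I(A;E)`
for every distribution of the binary input `A` (with `B = BEC(ε)(A)`,
`E = BSC(p)(A)`); conversely, if `ε > h₂(p)` and `A` is uniform, then
`I(A;B) = 1 - ε < 1 - h₂(p) = I(A;E)`. -/
theorem bec_more_capable_than_bsc (p ε : ℝ)
    (hp : p ∈ Set.Icc (0 : ℝ) (1 / 2)) (hε : ε ∈ Set.Icc (0 : ℝ) 1) :
    (ε ≤ h2 p → ∀ qA : Bool → ℝ, IsPMF qA →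
      MI (fun x : Bool × Option Bool × Bool => qA x.1 * BEC ε x.1 x.2.1 * BSC p x.1 x.2.2)
          (fun ω => ω.1) (fun ω => ω.2.2)
        ≤ MI (fun x : Bool × Option Bool × Bool => qA x.1 * BEC ε x.1 x.2.1 * BSC p x.1 x.2.2)
          (fun ω => ω.1) (fun ω => ω.2.1)) ∧
    (h2 p < ε →
      MI (binSrc p ε) (fun ω => ω.1) (fun ω => ω.2.1) = 1 - ε ∧
      (1 - ε : ℝ) < 1 - h2 p ∧
      1 - h2 p = MI (binSrc p ε) (fun ω => ω.1) (fun ω => ω.2.2)) :=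
  bec_more_capable_than_bsc_general p ε hp

end SLSC

end
end
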